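/- arXiv:1006.5934 — 3 statements merged into one kernel-verified Lean document; each statement's English description precedes it below -/
import Mathlib

section
/- For the Strauss process with density f(x) = Z⁻¹·β₁^{#x}·β₂^{s(x)} where 0 < β₂ ≤ 1 and s(x) counts pairs within distance R, define p(x,w,v) = 1[ρ(v,w) ≤ R]·(1−β₂)·β₂^{n(v,x)−1}, where n(v,x) = #{w ∈ x : ρ(v,w) ≤ R}. Then f(x)·p(x,w,v) = f(x+v−w)·p(x+v−w,v,w) for all configurations x, w ∈ x with ρ(v,w) ≤ R. -/
/-!
Write `x = y + w` with `w ∉ y`, so that `x + v - w = y + v`. Adding a point `u` to `y` adds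
`n(u, y)` close pairs to `s`, and since `ρ(v, w) ≤ R`, `n(v, y + w) - 1 = n(v, y)`. Hence both
sides equal `Z⁻¹ β₁^(#y + 1) (1 - β₂) β₂^(s(y) + n(w, y) + n(v, y))`, which is symmetric in
`v` and `w`.
-/

open Finset

section PairCount

variable {α : Type*} (r : α → α → Prop) [DecidableRel r]

theorem card_filter_singleton_product (u : α) (y : Finset α) :
    #(({u} ×ˢ y).filter fun q => r q.1 q.2) = #(y.filter (r u)) := by
  rw [singleton_product, filter_map, card_map]
  rfl

theorem card_filter_product_singleton [Std.Symm r] (u : α) (y : Finset α) :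
    #((y ×ˢ {u}).filter fun q => r q.1 q.2) = #(y.filter (r u)) := by
  rw [product_singleton, filter_map, card_map]
  exact congrArg card (filter_congr fun b _ => ⟨Std.Symm.symm _ _, Std.Symm.symm _ _⟩)

theorem card_filter_offDiag_insert [DecidableEq α] [Std.Symm r] {u : α} {y : Finset α}
    (hu : u ∉ y) :
    #((insert u y).offDiag.filter fun q => r q.1 q.2)
      = #(y.offDiag.filter fun q => r q.1 q.2) + 2 * #(y.filter (r u)) := by
  have h_outer : Disjoint (y.offDiag ∪ {u} ×ˢ y) (y ×ˢ {u}) := by grind [disjoint_left]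
  have h_inner : Disjoint y.offDiag ({u} ×ˢ y) := by grind [disjoint_left]
  rw [offDiag_insert hu, filter_union, card_union_of_disjoint (disjoint_filter_filter h_outer),
    filter_union, card_union_of_disjoint (disjoint_filter_filter h_inner),
    card_filter_singleton_product, card_filter_product_singleton]
  ring

theorem card_filter_insert_of_rel [DecidableEq α] {u t : α} {y : Finset α} (hu : u ∉ y)
    (htu : r t u) : #((insert u y).filter (r t)) = #(y.filter (r t)) + 1 := by
  rw [filter_insert, if_pos htu, card_insert_of_notMem fun h => hu (mem_of_mem_filter u h)]

theorem rpow_half_card_filter_offDiag_insert_mul [DecidableEq α] [Std.Symm r] {β : ℝ}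
    (hβ : 0 < β) {u t : α} {y : Finset α} (hu : u ∉ y) (htu : r t u) :
    β ^ ((#((insert u y).offDiag.filter fun q => r q.1 q.2) : ℝ) / 2)
        * β ^ ((#((insert u y).filter (r t)) : ℝ) - 1)
      = β ^ ((#(y.offDiag.filter fun q => r q.1 q.2) : ℝ) / 2
          + #(y.filter (r u)) + #(y.filter (r t))) := by
  rw [← Real.rpow_add hβ, card_filter_offDiag_insert r hu, card_filter_insert_of_rel r hu htu]
  congr 1
  push_cast
  ring

end PairCount

theorem strauss_swap_detailed_balance_general {S : Type*} [MetricSpace S] [DecidableEq S]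
    (β₁ β₂ R Z : ℝ) (hβ₂0 : 0 < β₂)
    (f : Finset S → ℝ)
    (hf : ∀ x : Finset S,
      f x = Z⁻¹ * β₁ ^ x.card *
        β₂ ^ ((((x.offDiag.filter fun q => dist q.1 q.2 ≤ R).card : ℝ)) / 2))
    (n : S → Finset S → ℕ)
    (hn : ∀ (v : S) (x : Finset S), n v x = (x.filter fun w => dist v w ≤ R).card)
    (p : Finset S → S → S → ℝ)
    (hp : ∀ (x : Finset S) (w v : S),
      p x w v = (if dist v w ≤ R then (1 : ℝ) else 0) * (1 - β₂) *
        β₂ ^ ((n v x : ℝ) - 1))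
    (x : Finset S) (w : S) (hw : w ∈ x) (v : S) (hv : v ∉ x)
    (hvw : dist v w ≤ R) :
    f x * p x w v =
      f ((insert v x).erase w) * p ((insert v x).erase w) v w := by
  have hwv : dist w v ≤ R := dist_comm w v ▸ hvw
  have : Std.Symm fun a b : S => dist a b ≤ R := ⟨fun a b h => dist_comm a b ▸ h⟩
  obtain ⟨y, hwy, rfl⟩ : ∃ y, w ∉ y ∧ x = insert w y :=
    ⟨x.erase w, notMem_erase w x, (insert_erase hw).symm⟩
  have hvy : v ∉ y := fun h => hv (mem_insert_of_mem h)
  have hvw_ne : v ≠ w := by rintro rfl; exact hv (mem_insert_self v y)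
  have h_weight :=
    rpow_half_card_filter_offDiag_insert_mul (fun a b : S => dist a b ≤ R) hβ₂0 hwy hvw
  have h_weight' :=
    rpow_half_card_filter_offDiag_insert_mul (fun a b : S => dist a b ≤ R) hβ₂0 hvy hwv
  rw [add_right_comm, ← h_weight] at h_weight'
  rw [erase_insert_of_ne hvw_ne, erase_insert hwy, hf, hf, hp, hp, hn, hn, if_pos hvw, if_pos hwv,
    card_insert_of_notMem hwy, card_insert_of_notMem hvy]
  linear_combination (Z⁻¹ * β₁ ^ (#y + 1) * (1 - β₂)) * h_weight'.symm

/-- For the Strauss density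
`f(x) = Z⁻¹ β₁^{#x} β₂^{s(x)}` (with `s(x)` the number of unordered pairs of
points of `x` within distance `R`, computed as half the number of ordered
pairs), the swap probabilities
`p(x,w,v) = 1[ρ(v,w) ≤ R]·(1−β₂)·β₂^{n(v,x)−1}` satisfy the detailed balance
relation `f(x)·p(x,w,v) = f(x+v−w)·p(x+v−w,v,w)`. -/
theorem strauss_swap_detailed_balance {S : Type*} [MetricSpace S] [DecidableEq S]
    (β₁ β₂ R Z : ℝ) (hβ₁ : 0 < β₁) (hβ₂0 : 0 < β₂) (hβ₂1 : β₂ ≤ 1) (hR : 0 < R)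
    (hZ : 0 < Z)
    (f : Finset S → ℝ)
    (hf : ∀ x : Finset S,
      f x = Z⁻¹ * β₁ ^ x.card *
        β₂ ^ ((((x.offDiag.filter fun q => dist q.1 q.2 ≤ R).card : ℝ)) / 2))
    (n : S → Finset S → ℕ)
    (hn : ∀ (v : S) (x : Finset S), n v x = (x.filter fun w => dist v w ≤ R).card)
    (p : Finset S → S → S → ℝ)
    (hp : ∀ (x : Finset S) (w v : S),
      p x w v = (if dist v w ≤ R then (1 : ℝ) else 0) * (1 - β₂) *
        β₂ ^ ((n v x : ℝ) - 1))
    (x : Finset S) (w : S) (hw : w ∈ x) (v : S) (hv : v ∉ x)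
    (hvw : dist v w ≤ R) :
    f x * p x w v =
      f ((insert v x).erase w) * p ((insert v x).erase w) v w :=
  strauss_swap_detailed_balance_general β₁ β₂ R Z hβ₂0 f hf n hn p hp x w hw v hv hvw
end

section
/- Sandwich property for the Strauss Birth Update with no swap (S = 0): if L ⊆ Y ⊆ U are finite point configurations, A_L = {w ∈ L : ρ(w,v) ≤ R}, A_U = {w ∈ U : ρ(w,v) ≤ R}, A_Y = {w ∈ Y : ρ(w,v) ≤ R}, and the update adds v to Y iff A_Y = ∅, then after applying the Birth Update rules (add v to both L and U if #A_L = #A_U = 0; add v only to U if #A_L = 0 and #A_U ≥ 1; leave both unchanged if #A_L ≥ 1) the new sets L', U' satisfy L' ⊆ Y' ⊆ U', where Y' is the result of updating Y. -/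
/-- Sandwich property for the Strauss Birth Update with no swap.
If `L ⊆ Y ⊆ U` are finite configurations, `A_X = {w ∈ X : ρ(w,v) ≤ R}` and the
underlying update adds `v` to `Y` iff `A_Y = ∅`, then applying the Birth Update
rules (add `v` to both `L` and `U` if `#A_L = #A_U = 0`; add `v` only to `U` if
`#A_L = 0` and `#A_U ≥ 1`; no change if `#A_L ≥ 1`) preserves the sandwich:
`L' ⊆ Y' ⊆ U'`. -/
theorem strauss_birth_update_no_swap_sandwich
    {S : Type*} [MetricSpace S] [DecidableEq S]
    (R : ℝ) (hR : 0 < R) (v : S) (L Y U : Finset S)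
    (hLY : L ⊆ Y) (hYU : Y ⊆ U)
    (AL AY AU : Finset S)
    (hAL : AL = L.filter fun w => dist w v ≤ R)
    (hAY : AY = Y.filter fun w => dist w v ≤ R)
    (hAU : AU = U.filter fun w => dist w v ≤ R)
    (Y' : Finset S) (hY' : Y' = if AY = ∅ then insert v Y else Y)
    (L' : Finset S) (hL' : L' = if AL = ∅ ∧ AU = ∅ then insert v L else L)
    (U' : Finset S) (hU' : U' = if AL = ∅ then insert v U else U) :
    L' ⊆ Y' ∧ Y' ⊆ U' := by
  have hALY : AL ⊆ AY := by
    rw [hAL, hAY]; exact Finset.filter_subset_filter _ hLY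
  have hAYU : AY ⊆ AU := by
    rw [hAY, hAU]; exact Finset.filter_subset_filter _ hYU
  subst hY' hL' hU'
  constructor
  · by_cases h : AL = ∅ ∧ AU = ∅
    · have hYe : AY = ∅ := Finset.subset_empty.mp (h.2 ▸ hAYU)
      simp [h, hYe, Finset.insert_subset_insert _ hLY]
    · simp only [h, if_neg h, if_false]
      by_cases hy : AY = ∅
      · simp only [hy, if_pos hy]; exact hLY.trans (Finset.subset_insert _ _)
      · simp [hy]; exact hLY
  · by_cases hy : AY = ∅
    · have hLe : AL = ∅ := Finset.subset_empty.mp (hy ▸ hALY)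
      simp [hy, hLe, Finset.insert_subset_insert _ hYU]
    · by_cases hl : AL = ∅
      · simp only [hy, hl, if_neg hy, if_pos hl]; exact hYU.trans (Finset.subset_insert _ _)
      · simp [hy, hl]; exact hYU
end

section
/- Sandwich property for the Strauss Birth Update with swap (S = 1): let L ⊆ Y ⊆ U with A_L ⊆ A_Y ⊆ A_U defined as the neighbors of v within distance R. The underlying update on Y is: if #A_Y = 0 add v; if #A_Y = 1 replace the unique element of A_Y by v; otherwise leave Y unchanged. The bounding update is: if #A_L = 0, #A_U = 0: add v to both; if #A_L = 0, #A_U = 1: add v to both and remove A_U from U; if #A_L = 0, #A_U > 1: add v to U only; if #A_L = 1 = #A_U: replace A_L by v in both; if #A_L = 1, #A_U > 1: remove A_L from L and add v to U; if #A_L > 1: no change. Then the updated sets satisfy L' ⊆ Y' ⊆ U'. -/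
/-- Sandwich property for the Strauss Birth Update with swap.
`L ⊆ Y ⊆ U` are finite configurations and `A_X = {w ∈ X : ρ(w,v) ≤ R}` for the
proposed (new) birth point `v ∉ U`.  The underlying update: if `#A_Y = 0` add
`v` to `Y`; if `#A_Y = 1` replace the unique element of `A_Y` by `v`; otherwise
leave `Y` unchanged.  The bounding update follows lines 4–8 of Birth Update.
Then the updated sets satisfy `L' ⊆ Y' ⊆ U'`. -/
theorem strauss_birth_update_swap_sandwich
    {S : Type*} [MetricSpace S] [DecidableEq S]
    (R : ℝ) (hR : 0 < R) (v : S) (L Y U : Finset S)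
    (hLY : L ⊆ Y) (hYU : Y ⊆ U) (hv : v ∉ U)
    (AL AY AU : Finset S)
    (hAL : AL = L.filter fun w => dist w v ≤ R)
    (hAY : AY = Y.filter fun w => dist w v ≤ R)
    (hAU : AU = U.filter fun w => dist w v ≤ R)
    (Y' : Finset S)
    (hY' : Y' = if AY.card = 0 then insert v Y
           else if AY.card = 1 then insert v (Y \ AY)
           else Y)
    (L' U' : Finset S)
    (hLU' : (AL.card = 0 ∧ AU.card = 0 ∧ L' = insert v L ∧ U' = insert v U) ∨
            (AL.card = 0 ∧ AU.card = 1 ∧ L' = insert v L ∧ U' = insert v (U \ AU)) ∨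
            (AL.card = 0 ∧ 1 < AU.card ∧ L' = L ∧ U' = insert v U) ∨
            (AL.card = 1 ∧ AU.card = 1 ∧ L' = insert v (L \ AL) ∧ U' = insert v (U \ AU)) ∨
            (AL.card = 1 ∧ 1 < AU.card ∧ L' = L \ AL ∧ U' = insert v U) ∨
            (1 < AL.card ∧ L' = L ∧ U' = U)) :
    L' ⊆ Y' ∧ Y' ⊆ U' := by
  have hALY : AL ⊆ AY := by subst hAL hAY; exact Finset.filter_subset_filter _ hLY
  have hAYU : AY ⊆ AU := by subst hAY hAU; exact Finset.filter_subset_filter _ hYU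
  -- if AL = ∅ then L ⊆ Y \ AY
  have hLsub : AL = ∅ → L ⊆ Y \ AY := by
    intro h0 x hx
    rw [Finset.mem_sdiff]
    refine ⟨hLY hx, fun hxA => ?_⟩
    have : x ∈ AL := by
      rw [hAL, Finset.mem_filter]
      exact ⟨hx, (by rw [hAY, Finset.mem_filter] at hxA; exact hxA.2)⟩
    simp [h0] at this
  have hYU' : Y \ AY ⊆ U \ AU := by
    intro x hx
    rw [Finset.mem_sdiff] at hx ⊢
    refine ⟨hYU hx.1, fun hxA => ?_⟩
    exact hx.2 (by rw [hAY, Finset.mem_filter]; exact ⟨hx.1, (by rw [hAU, Finset.mem_filter] at hxA; exact hxA.2)⟩)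
  have hLUeq : AL.card = AU.card → AL = AU :=
    fun h => Finset.eq_of_subset_of_card_le (hALY.trans hAYU) h.ge
  have hLYeq : AL.card = AY.card → AL = AY :=
    fun h => Finset.eq_of_subset_of_card_le hALY h.ge
  have hYUeq : AY.card = AU.card → AY = AU :=
    fun h => Finset.eq_of_subset_of_card_le hAYU h.ge
  rcases hLU' with ⟨h1, h2, hL, hU⟩ | ⟨h1, h2, hL, hU⟩ | ⟨h1, h2, hL, hU⟩ |
      ⟨h1, h2, hL, hU⟩ | ⟨h1, h2, hL, hU⟩ | ⟨h1, hL, hU⟩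
  · -- AL = AU = 0, so AY = 0
    have hy0 : AY.card = 0 := Nat.le_antisymm (h2 ▸ Finset.card_le_card hAYU) (Nat.zero_le _)
    rw [hY', if_pos hy0, hL, hU]
    exact ⟨Finset.insert_subset_insert _ hLY, Finset.insert_subset_insert _ hYU⟩
  · -- AL = 0, AU = 1
    have hy : AY.card ≤ 1 := h2 ▸ Finset.card_le_card hAYU
    by_cases h : AY.card = 0
    · rw [hY', if_pos h, hL, hU]
      constructor
      · exact Finset.insert_subset_insert _ hLY
      · refine Finset.insert_subset_insert _ (fun x hx => ?_)
        rw [Finset.mem_sdiff]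
        refine ⟨hYU hx, fun hxA => ?_⟩
        have : x ∈ AY := by
          rw [hAY, Finset.mem_filter]
          exact ⟨hx, (by rw [hAU, Finset.mem_filter] at hxA; exact hxA.2)⟩
        simp [Finset.card_eq_zero.mp h] at this
    · rw [hY', if_neg h, if_pos (by omega), hL, hU]
      have hL0 : AL = ∅ := Finset.card_eq_zero.mp h1
      exact ⟨Finset.insert_subset_insert _ (hLsub hL0),
        Finset.insert_subset_insert _ hYU'⟩
  · -- AL = 0, AU > 1
    have hL0 : AL = ∅ := Finset.card_eq_zero.mp h1
    rw [hY', hL, hU]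
    split_ifs with ha hb
    · exact ⟨(Finset.subset_insert _ _).trans (Finset.insert_subset_insert _ hLY),
        Finset.insert_subset_insert _ hYU⟩
    · exact ⟨(hLsub hL0).trans (Finset.subset_insert _ _),
        Finset.insert_subset_insert _ ((Finset.sdiff_subset).trans hYU)⟩
    · exact ⟨hLY, hYU.trans (Finset.subset_insert _ _)⟩
  · -- AL = 1 = AU
    have hy : AY.card = 1 := by
      have := Finset.card_le_card hALY
      have := Finset.card_le_card hAYU
      omega
    rw [hY', if_neg (by omega), if_pos hy, hL, hU]
    refine ⟨Finset.insert_subset_insert _ ?_, Finset.insert_subset_insert _ hYU'⟩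
    rw [hLYeq (by omega)]
    intro x hx
    rw [Finset.mem_sdiff] at hx ⊢
    exact ⟨hLY hx.1, hx.2⟩
  · -- AL = 1, AU > 1
    have hy : 1 ≤ AY.card := h1 ▸ Finset.card_le_card hALY
    rw [hY', hL, hU]
    split_ifs with ha hb
    · omega
    · rw [hLYeq (by omega)]
      refine ⟨?_, Finset.insert_subset_insert _ ((Finset.sdiff_subset).trans hYU)⟩
      refine (fun x hx => Finset.mem_insert_of_mem ?_)
      rw [Finset.mem_sdiff] at hx ⊢
      exact ⟨hLY hx.1, hx.2⟩
    · exact ⟨(Finset.sdiff_subset).trans hLY, hYU.trans (Finset.subset_insert _ _)⟩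
  · -- AL > 1
    have hy : 1 < AY.card := lt_of_lt_of_le h1 (Finset.card_le_card hALY)
    rw [hY', if_neg (by omega), if_neg (by omega), hL, hU]
    exact ⟨hLY, hYU⟩
end
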